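/- Let Z₁, ..., Z_N be i.i.d. standard Gaussian vectors in ℝ^n, K symmetric invertible, M symmetric, and set X_k = K^{-1}Z_k, Y_k = K^{-1}MZ_k. Then the estimator (1/N) Σ_{k=1}^N X_k ∘ Y_k (Hadamard product) is an unbiased estimator of the diagonal of Σ = K^{-1}MK^{-1}: its expectation equals the vector (Σ_{11}, ..., Σ_{nn}). -/

import Mathlib

/-!
By linearity, `E[(A Z)ᵢ (B Z)ⱼ] = (A C Bᵀ)ᵢⱼ` whenever `C` is the second-moment matrix of `Z`.
With `C = 1`, `A = K⁻¹M` and `B = K⁻¹` each summand of the estimator has mean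
`(K⁻¹ M (K⁻¹)ᵀ)ᵢᵢ`, and `(K⁻¹)ᵀ = K⁻¹` because `K` is symmetric.
-/

open Matrix MeasureTheory

section SecondMoments

variable {Ω ι m p : Type*} [MeasurableSpace Ω] {μ : Measure Ω} [Fintype ι]

lemma mulVec_apply_mul_mulVec_apply (A : Matrix m ι ℝ) (B : Matrix p ι ℝ) (z : ι → ℝ)
    (i : m) (j : p) :
    (A *ᵥ z) i * (B *ᵥ z) j = ∑ a, ∑ b, A i a * B j b * (z a * z b) := by
  simp only [mulVec, dotProduct, Finset.sum_mul_sum]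
  exact Finset.sum_congr rfl fun a _ => Finset.sum_congr rfl fun b _ => by ring

lemma integrable_mulVec_apply_mul_mulVec_apply {Z : Ω → ι → ℝ}
    (hZ : ∀ a b, Integrable (fun ω => Z ω a * Z ω b) μ)
    (A : Matrix m ι ℝ) (B : Matrix p ι ℝ) (i : m) (j : p) :
    Integrable (fun ω => (A *ᵥ Z ω) i * (B *ᵥ Z ω) j) μ := by
  simp_rw [mulVec_apply_mul_mulVec_apply]
  exact integrable_finsetSum _ fun a _ => integrable_finsetSum _ fun b _ => (hZ a b).const_mul _

lemma integral_mulVec_apply_mul_mulVec_apply {Z : Ω → ι → ℝ}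
    (hZ : ∀ a b, Integrable (fun ω => Z ω a * Z ω b) μ)
    (C : Matrix ι ι ℝ) (hC : ∀ a b, ∫ ω, Z ω a * Z ω b ∂μ = C a b)
    (A : Matrix m ι ℝ) (B : Matrix p ι ℝ) (i : m) (j : p) :
    ∫ ω, (A *ᵥ Z ω) i * (B *ᵥ Z ω) j ∂μ = (A * C * Bᵀ) i j := by
  simp_rw [mulVec_apply_mul_mulVec_apply]
  rw [integral_finsetSum _ fun a _ => integrable_finsetSum _ fun b _ => (hZ a b).const_mul _]
  simp_rw [integral_finsetSum _ fun b _ => (hZ _ b).const_mul _, integral_const_mul, hC]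
  simp only [mul_apply, transpose_apply, Finset.sum_mul]
  rw [Finset.sum_comm]
  exact Finset.sum_congr rfl fun a _ => Finset.sum_congr rfl fun b _ => by ring

end SecondMoments

theorem stmt_16_general {n N : ℕ} (hN : 0 < N) {Ω : Type*} [MeasureSpace Ω]
    (K M : Matrix (Fin n) (Fin n) ℝ)
    (hKsymm : K.IsSymm)
    (Z : Fin N → Ω → Fin n → ℝ)
    (hZint : ∀ k i j, Integrable (fun ω => Z k ω i * Z k ω j) (volume : Measure Ω))
    (hZ : ∀ k i j, ∫ ω, Z k ω i * Z k ω j ∂(volume : Measure Ω) = if i = j then (1 : ℝ) else 0)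
    (X Y : Fin N → Ω → Fin n → ℝ)
    (hX : ∀ k ω, X k ω = K⁻¹ *ᵥ Z k ω)
    (hY : ∀ k ω, Y k ω = (K⁻¹ * M) *ᵥ Z k ω) :
    ∀ i : Fin n, (∫ ω, (1 / (N : ℝ)) * ∑ k, X k ω i * Y k ω i ∂(volume : Measure Ω))
      = (K⁻¹ * M * K⁻¹) i i := by
  intro i
  have hXY : ∀ k, (fun ω => X k ω i * Y k ω i)
      = fun ω => ((K⁻¹ * M) *ᵥ Z k ω) i * (K⁻¹ *ᵥ Z k ω) i := fun k => by
    funext ω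
    rw [hX, hY, mul_comm]
  have hmean : ∀ k, ∫ ω, X k ω i * Y k ω i = (K⁻¹ * M * K⁻¹) i i := fun k => by
    rw [hXY, integral_mulVec_apply_mul_mulVec_apply (hZint k) 1 (fun a b => by rw [hZ, one_apply]),
      mul_one, transpose_nonsing_inv, hKsymm.eq]
  rw [integral_const_mul, integral_finsetSum _ fun k _ => by
    rw [hXY]; exact integrable_mulVec_apply_mul_mulVec_apply (hZint k) _ _ _ _]
  simp only [hmean, Finset.sum_const, Finset.card_univ, Fintype.card_fin, nsmul_eq_mul]
  field_simp

theorem stmt_16 {n N : ℕ} (hN : 0 < N) {Ω : Type*} [MeasureSpace Ω]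
    [IsProbabilityMeasure (volume : Measure Ω)]
    (K M : Matrix (Fin n) (Fin n) ℝ) (hK : IsUnit K)
    (hKsymm : K.IsSymm) (hMsymm : M.IsSymm)
    (Z : Fin N → Ω → Fin n → ℝ)
    (hZint : ∀ k i j, Integrable (fun ω => Z k ω i * Z k ω j) (volume : Measure Ω))
    (hZ : ∀ k i j, ∫ ω, Z k ω i * Z k ω j ∂(volume : Measure Ω) = if i = j then (1 : ℝ) else 0)
    (X Y : Fin N → Ω → Fin n → ℝ)
    (hX : ∀ k ω, X k ω = K⁻¹ *ᵥ Z k ω)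
    (hY : ∀ k ω, Y k ω = (K⁻¹ * M) *ᵥ Z k ω) :
    ∀ i : Fin n, (∫ ω, (1 / (N : ℝ)) * ∑ k, X k ω i * Y k ω i ∂(volume : Measure Ω))
      = (K⁻¹ * M * K⁻¹) i i :=
  stmt_16_general hN K M hKsymm Z hZint hZ X Y hX hY
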